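/- arXiv:1412.1192 — 3 statements merged into one kernel-verified Lean document; each statement's English description precedes it below -/
import Mathlib

section
/- The family of bounded operators indexed by pairs (θ, ℓ) with θ ∈ [0, 2π) and ℓ ∈ ℤ, given by (θ, ℓ) ↦ W(θ, ℓ), is linearly independent over ℂ: for any finitely supported family of coefficients c_{(θ,ℓ)} ∈ ℂ with θ ranging over [0,2π) and ℓ over ℤ, if Σ c_{(θ,ℓ)} • W(θ,ℓ) = 0 then all c_{(θ,ℓ)} = 0. -/
/-!
The matrix of `W(θ, ℓ)` in the basis `(e m)` is supported on the `ℓ`-th off-diagonal, where its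
entries are `exp (iℓθ/2) · exp (iθ)^m`. Reading off the off-diagonals, a linear relation among the
`W(θ, ℓ)` splits into one relation for each `ℓ` among the characters `m ↦ exp (iθ)^m` of `ℤ`. For
`θ ∈ [0, 2π)` these characters are pairwise distinct, hence linearly independent by Dedekind's
lemma.
-/

open Complex

noncomputable section

/-- The Hilbert space `H := ℓ²(ℤ, ℂ)`. -/
abbrev H : Type := lp (fun _ : ℤ => ℂ) 2

/-- The orthonormal basis vectors `e ℓ = lp.single 2 ℓ 1`. -/
def e (ℓ : ℤ) : H := lp.single 2 ℓ 1

/-- The Weyl operators `W(θ, ℓ) := exp(−iℓθ/2) • (U θ ∘ V^ℓ)`. -/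
def W (U : ℝ → (H →L[ℂ] H)) (V : unitary (H →L[ℂ] H)) (θ : ℝ) (ℓ : ℤ) : H →L[ℂ] H :=
  Complex.exp (-Complex.I * ℓ * θ / 2) •
    ((U θ) ∘L ((V ^ ℓ : unitary (H →L[ℂ] H)) : H →L[ℂ] H))

open scoped InnerProductSpace

theorem zpow_smul_of_smul_eq_add_one {G X : Type*} [Group G] [MulAction G X] {g : G}
    {f : ℤ → X} (hf : ∀ n, g • f n = f (n + 1)) (k m : ℤ) : g ^ k • f m = f (m + k) := by
  induction k using Int.induction_on generalizing m with
  | zero => rw [zpow_zero, one_smul, add_zero]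
  | succ k ih => rw [zpow_add_one, mul_smul, hf, ih, add_assoc, add_comm 1]
  | pred k ih =>
    have hf_inv : g⁻¹ • f m = f (m - 1) := by rw [inv_smul_eq_iff, hf, sub_add_cancel]
    rw [zpow_sub_one, mul_smul, hf_inv, ih, sub_add_eq_add_sub, add_sub_assoc]

theorem linearIndependent_zpow_of_injective {K ι : Type*} [Field K] {u : ι → Kˣ}
    (hu : Function.Injective u) : LinearIndependent K (fun i (n : ℤ) => (u i : K) ^ n) := by
  let χ : ι → Multiplicative ℤ →* K := fun i => (Units.coeHom K).comp (zpowersHom Kˣ (u i))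
  have hχ : Function.Injective χ := fun i j hij => hu <| Units.ext <| by
    simpa [χ] using DFunLike.congr_fun hij (Multiplicative.ofAdd 1)
  have hχ_apply : ∀ i (n : ℤ), χ i (.ofAdd n) = (u i : K) ^ n := fun i n => by simp [χ]
  simp only [← hχ_apply]
  exact (linearIndependent_monoidHom (Multiplicative ℤ) K).comp χ hχ

theorem linearIndependent_exp_mul_I_zpow :
    LinearIndependent ℂ (fun (θ : Set.Ico (0 : ℝ) (2 * Real.pi)) (n : ℤ) => exp (θ * I) ^ n) :=
  linearIndependent_zpow_of_injective (u := fun θ => Units.mk0 _ (exp_ne_zero _)) fun θ θ' h =>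
    Subtype.ext <| Circle.exp_injOn_Ico (by simp) θ.2 θ'.2 <| Circle.ext <| congrArg Units.val h

theorem linearIndependent_single_exp_mul_I_zpow :
    LinearIndependent ℂ (fun p : Set.Ico (0 : ℝ) (2 * Real.pi) × ℤ =>
      (Pi.single p.2 fun m : ℤ => exp (p.1 * I) ^ m : ℤ → ℤ → ℂ)) := by
  rw [← linearIndependent_equiv ((Equiv.sigmaEquivProd ℤ _).trans (Equiv.prodComm _ _))]
  exact Pi.linearIndependent_single (ιs := fun _ => Set.Ico (0 : ℝ) (2 * Real.pi))
    (fun _ θ m => exp (θ * I) ^ m) fun _ => linearIndependent_exp_mul_I_zpow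

theorem inner_e_e (k j : ℤ) : ⟪e k, e j⟫_ℂ = if k = j then 1 else 0 := by
  simp [e, lp.inner_single_left, lp.single_apply, Pi.single_apply]

def offDiagonalCoeffs : (H →L[ℂ] H) →ₗ[ℂ] ℤ → ℤ → ℂ where
  toFun T ℓ m := ⟪e (m + ℓ), T (e m)⟫_ℂ
  map_add' T T' := by ext; simp
  map_smul' c T := by ext; simp

section Weyl

variable {U : ℝ → (H →L[ℂ] H)} {V : unitary (H →L[ℂ] H)}
    (hU : ∀ (θ : ℝ) (ℓ : ℤ), U θ (e ℓ) = exp (I * ℓ * θ) • e ℓ)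
    (hV : ∀ ℓ : ℤ, (V : H →L[ℂ] H) (e ℓ) = e (ℓ + 1))
include hU hV

theorem W_apply_e (θ : ℝ) (ℓ m : ℤ) :
    W U V θ ℓ (e m) = (exp (ℓ * θ * I / 2) * exp (θ * I) ^ m) • e (m + ℓ) := by
  have hVpow : ((V ^ ℓ : unitary (H →L[ℂ] H)) : H →L[ℂ] H) (e m) = e (m + ℓ) :=
    zpow_smul_of_smul_eq_add_one (g := V) hV ℓ m
  rw [W, smul_apply, ContinuousLinearMap.comp_apply, hVpow, hU, smul_smul,
    ← exp_int_mul, ← exp_add, ← exp_add]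
  congr 2
  push_cast
  ring

theorem offDiagonalCoeffs_W (θ : ℝ) (ℓ : ℤ) :
    offDiagonalCoeffs (W U V θ ℓ) =
      exp (ℓ * θ * I / 2) • Pi.single ℓ (fun m : ℤ => exp (θ * I) ^ m) := by
  ext k m
  simp only [offDiagonalCoeffs, LinearMap.coe_mk, AddHom.coe_mk, W_apply_e hU hV,
    inner_smul_right, inner_e_e, add_right_inj, Pi.smul_apply, Pi.single_apply, smul_eq_mul]
  split_ifs <;> simp

end Weyl

/-- **Linear independence of the Weyl operators.** The family
`(θ, ℓ) ↦ W(θ, ℓ)`, indexed by pairs with `θ ∈ [0, 2π)` and `ℓ ∈ ℤ`, is linearly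
independent over `ℂ` in the space of bounded operators on `H`. -/
theorem weyl_linearIndependent
    (U : ℝ → (H →L[ℂ] H)) (V : unitary (H →L[ℂ] H))
    (hU : ∀ (θ : ℝ) (ℓ : ℤ), U θ (e ℓ) = Complex.exp (Complex.I * ℓ * θ) • e ℓ)
    (hV : ∀ ℓ : ℤ, (V : H →L[ℂ] H) (e ℓ) = e (ℓ + 1)) :
    LinearIndependent ℂ
      (fun p : (Set.Ico (0 : ℝ) (2 * Real.pi)) × ℤ => W U V (p.1 : ℝ) p.2) := by
  refine LinearIndependent.of_comp offDiagonalCoeffs ?_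
  convert linearIndependent_single_exp_mul_I_zpow.units_smul
    (fun p => Units.mk0 (exp (p.2 * p.1 * I / 2)) (exp_ne_zero _)) using 1
  exact funext fun p => offDiagonalCoeffs_W hU hV p.1 p.2
end
end

section
/- The Weyl pair acts irreducibly: if a bounded operator T on H satisfies T ∘ U(θ) = U(θ) ∘ T for every θ ∈ ℝ and T ∘ V = V ∘ T, then there exists c ∈ ℂ with T = c • (identity on H). Consequently the von Neumann algebra generated by {U(θ) : θ ∈ ℝ} ∪ {V} is all of B(H). -/
/-!
Comparing `m`-th coordinates in `T (U θ e ℓ) = U θ (T e ℓ)` gives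
`exp (i m θ) (T e ℓ) m = exp (i ℓ θ) (T e ℓ) m`, and for `m ≠ ℓ` the choice `θ = π / (m - ℓ)` makes
the two characters differ; so `T` is diagonal, `T e ℓ = c ℓ • e ℓ`. Commuting with the shift `V`
forces `c (ℓ + 1) = c ℓ`, so `c` is constant and `T` is a scalar. Then every element of the
commutant is central, and the double commutant is everything.
-/

open Complex

noncomputable section

theorem ext_e {F : Type*} [AddCommMonoid F] [Module ℂ F] [TopologicalSpace F] [T2Space F]
    ⦃f g : H →L[ℂ] F⦄ (h : ∀ ℓ, f (e ℓ) = g (e ℓ)) : f = g :=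
  lp.ext_continuousLinearMap (by norm_num) fun ℓ => ContinuousLinearMap.ext_ring (h ℓ)

@[simp]
theorem e_apply_self (ℓ : ℤ) : e ℓ ℓ = 1 :=
  lp.single_apply_self _ _ _

theorem e_apply_of_ne {ℓ m : ℤ} (h : m ≠ ℓ) : e ℓ m = 0 :=
  lp.single_apply_ne _ _ _ h

theorem eq_apply_smul_e_of_apply_eq_zero {x : H} {ℓ : ℤ} (h : ∀ m ≠ ℓ, x m = 0) :
    x = x ℓ • e ℓ := by
  ext m
  by_cases hm : m = ℓ
  · subst hm
    simp
  · simp [h m hm, e_apply_of_ne hm]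

theorem apply_eq_mul_of_apply_e {D : H →L[ℂ] H} {d : ℤ → ℂ} (hD : ∀ ℓ, D (e ℓ) = d ℓ • e ℓ)
    (x : H) (m : ℤ) : D x m = d m * x m := by
  have hcoord : (lp.evalCLM ℂ _ 2 m).comp D = d m • lp.evalCLM ℂ _ 2 m := by
    refine ext_e fun ℓ => ?_
    change D (e ℓ) m = d m * e ℓ m
    rw [hD]
    by_cases hm : m = ℓ
    · subst hm
      rfl
    · simp [e_apply_of_ne hm]
  exact congr($hcoord x)

theorem apply_e_apply_eq_zero_of_commute {T D : H →L[ℂ] H} {d : ℤ → ℂ}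
    (hD : ∀ ℓ, D (e ℓ) = d ℓ • e ℓ) (hTD : T ∘L D = D ∘L T) {ℓ m : ℤ} (hd : d m ≠ d ℓ) :
    T (e ℓ) m = 0 := by
  have h : d ℓ • T (e ℓ) = D (T (e ℓ)) := by
    simpa only [ContinuousLinearMap.comp_apply, hD, map_smul] using congr($hTD (e ℓ))
  have hm : d ℓ * T (e ℓ) m = d m * T (e ℓ) m := by
    rw [← apply_eq_mul_of_apply_e hD, ← h]
    rfl
  have hzero : (d m - d ℓ) * T (e ℓ) m = 0 := by
    linear_combination -hm
  exact (mul_eq_zero.1 hzero).resolve_left (sub_ne_zero.2 hd)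

theorem apply_e_eq_smul_of_commute_diagonal {ι : Type*} {D : ι → H →L[ℂ] H} {d : ι → ℤ → ℂ}
    (hD : ∀ i ℓ, D i (e ℓ) = d i ℓ • e ℓ) (hsep : ∀ ℓ m, m ≠ ℓ → ∃ i, d i m ≠ d i ℓ)
    {T : H →L[ℂ] H} (hT : ∀ i, T ∘L D i = D i ∘L T) (ℓ : ℤ) :
    T (e ℓ) = T (e ℓ) ℓ • e ℓ :=
  eq_apply_smul_e_of_apply_eq_zero fun m hm =>
    let ⟨i, hi⟩ := hsep ℓ m hm
    apply_e_apply_eq_zero_of_commute (hD i) (hT i) hi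

theorem eq_smul_one_of_commute_shift {T S : H →L[ℂ] H} (hS : ∀ ℓ, S (e ℓ) = e (ℓ + 1))
    (hdiag : ∀ ℓ, T (e ℓ) = T (e ℓ) ℓ • e ℓ) (hTS : T ∘L S = S ∘L T) :
    T = T (e 0) 0 • 1 := by
  have hperiodic : Function.Periodic (fun ℓ => T (e ℓ) ℓ) 1 := fun ℓ => by
    have h : T (e (ℓ + 1)) = T (e ℓ) ℓ • e (ℓ + 1) := by
      have h := congr($hTS (e ℓ))
      rwa [ContinuousLinearMap.comp_apply, ContinuousLinearMap.comp_apply, hS, hdiag ℓ, map_smul,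
        hS] at h
    simpa using congr($h (ℓ + 1))
  refine ext_e fun ℓ => (hdiag ℓ).trans ?_
  simpa using congr($(hperiodic.int_mul_eq ℓ) • e ℓ)

theorem exists_exp_ne {ℓ m : ℤ} (h : m ≠ ℓ) :
    ∃ θ : ℝ, exp (I * m * θ) ≠ exp (I * ℓ * θ) := by
  have hml : (m - ℓ : ℂ) ≠ 0 := sub_ne_zero.2 (by exact_mod_cast h)
  refine ⟨Real.pi / (m - ℓ), fun heq => exp_ne_zero (I * ℓ * (Real.pi / (m - ℓ) : ℝ)) ?_⟩
  have hshift : I * m * (Real.pi / (m - ℓ) : ℝ) =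
      I * ℓ * (Real.pi / (m - ℓ) : ℝ) + Real.pi * I := by
    push_cast
    field_simp
    ring
  rw [hshift, exp_add, exp_pi_mul_I] at heq
  linear_combination -heq / 2

theorem Set.centralizer_centralizer_eq_univ_of_forall_eq_smul_one {R A : Type*}
    [CommSemiring R] [Semiring A] [Algebra R A] {S : Set A}
    (h : ∀ T ∈ S.centralizer, ∃ c : R, T = c • 1) :
    S.centralizer.centralizer = Set.univ :=
  Set.centralizer_eq_top_iff_subset.2 fun T hT => by
    obtain ⟨c, rfl⟩ := h T hT
    rw [← Algebra.algebraMap_eq_smul_one]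
    exact Set.algebraMap_mem_center c

/-- **Irreducibility of the Weyl pair.** Any bounded operator commuting with every
`U θ` and with `V` is a scalar multiple of the identity; consequently the double
commutant of `{U θ : θ ∈ ℝ} ∪ {V}` (hence the von Neumann algebra they generate)
is all of `B(H)`. -/
theorem weyl_pair_irreducible
    (U : ℝ → (H →L[ℂ] H)) (V : unitary (H →L[ℂ] H))
    (hU : ∀ (θ : ℝ) (ℓ : ℤ), U θ (e ℓ) = Complex.exp (Complex.I * ℓ * θ) • e ℓ)
    (hV : ∀ ℓ : ℤ, (V : H →L[ℂ] H) (e ℓ) = e (ℓ + 1)) :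
    (∀ T : H →L[ℂ] H,
        (∀ θ : ℝ, T ∘L U θ = U θ ∘L T) →
        T ∘L (V : H →L[ℂ] H) = (V : H →L[ℂ] H) ∘L T →
        ∃ c : ℂ, T = c • (1 : H →L[ℂ] H)) ∧
    Set.centralizer (Set.centralizer (Set.range U ∪ {(V : H →L[ℂ] H)})) =
      Set.univ := by
  have scalar : ∀ T : H →L[ℂ] H, (∀ θ : ℝ, T ∘L U θ = U θ ∘L T) →
      T ∘L (V : H →L[ℂ] H) = (V : H →L[ℂ] H) ∘L T → ∃ c : ℂ, T = c • 1 :=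
    fun T hTU hTV => ⟨_, eq_smul_one_of_commute_shift hV
      (apply_e_eq_smul_of_commute_diagonal (d := fun (θ : ℝ) ℓ => exp (I * ℓ * θ)) hU
        (fun _ _ hm => exists_exp_ne hm) hTU) hTV⟩
  refine ⟨scalar,
    Set.centralizer_centralizer_eq_univ_of_forall_eq_smul_one (R := ℂ) fun T hT => ?_⟩
  exact scalar T (fun θ => (hT _ (.inl ⟨θ, rfl⟩)).symm) (hT _ (.inr rfl)).symm
end
end

section
/- Iterative construction of qubit subalgebras: for every natural number n, there exists a ℂ-star-algebra equivalence between B(H) and the star algebra Matrix (Fin (2^n)) (Fin (2^n)) (B(H)) of 2^n × 2^n matrices with entries in B(H) (with entrywise-adjoint conjugate-transpose star); i.e. B(H) ≅ M₂(ℂ)^{⊗ n} ⊗ B(H) as star algebras. -/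
/-!
Since `Fin (2 ^ n) × ℤ ≃ ℤ`, the Hilbert basis of `ℓ²(ℤ)` splits into `2 ^ n` copies of itself,
and the corresponding isometries `Sᵢ` satisfy the Cuntz relations `Sᵢ⋆ Sⱼ = δᵢⱼ`,
`∑ Sᵢ Sᵢ⋆ = 1`. In any star algebra such a family makes `a ↦ (Sᵢ⋆ a Sⱼ)ᵢⱼ` a star-isomorphism
onto the matrix algebra, with inverse `M ↦ ∑ Sᵢ Mᵢⱼ Sⱼ⋆`.
-/

open Complex

noncomputable section

section CuntzFamily

open Finset

variable {A ι : Type*} [Semiring A] [StarRing A] [Fintype ι] [DecidableEq ι]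

structure IsCuntzFamily (S : ι → A) : Prop where
  star_mul : ∀ i j, star (S i) * S j = if i = j then 1 else 0
  sum_mul_star : ∑ i, S i * star (S i) = 1

namespace IsCuntzFamily

variable {S : ι → A}

theorem sum_mul_star_mul (hS : IsCuntzFamily S) (a : A) : ∑ i, S i * (star (S i) * a) = a := by
  simp only [← mul_assoc, ← sum_mul, hS.sum_mul_star, one_mul]

theorem star_mul_sum_mul_star_mul (hS : IsCuntzFamily S) (M : Matrix ι ι A) (i j : ι) :
    star (S i) * (∑ k, ∑ l, S k * M k l * star (S l)) * S j = M i j := by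
  have h (k l : ι) : star (S i) * (S k * M k l * star (S l)) * S j =
      (star (S i) * S k) * M k l * (star (S l) * S j) := by simp only [mul_assoc]
  simp only [mul_sum, sum_mul, h, hS.star_mul, ite_mul, mul_ite, one_mul, zero_mul, mul_one,
    mul_zero, sum_ite_eq, sum_ite_eq', mem_univ, if_true]

variable (R : Type*) [CommSemiring R] [Algebra R A]

def starAlgEquivMatrix (hS : IsCuntzFamily S) : A ≃⋆ₐ[R] Matrix ι ι A where
  toFun a := .of fun i j => star (S i) * a * S j
  invFun M := ∑ i, ∑ j, S i * M i j * star (S j)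
  left_inv a := by
    simp only [Matrix.of_apply, mul_assoc, ← mul_sum, hS.sum_mul_star, mul_one,
      hS.sum_mul_star_mul]
  right_inv M := by
    ext i j
    exact hS.star_mul_sum_mul_star_mul M i j
  map_mul' a b := by
    ext i j
    simp only [Matrix.mul_apply, Matrix.of_apply, mul_assoc, ← mul_sum, hS.sum_mul_star_mul]
  map_add' a b := by
    ext i j
    simp [mul_add, add_mul]
  map_smul' c a := by
    ext i j
    simp
  map_star' a := by
    ext i j
    simp [mul_assoc]

end IsCuntzFamily
end CuntzFamily

namespace HilbertBasis

variable {𝕜 E κ : Type*} [RCLike 𝕜] [NormedAddCommGroup E] [InnerProductSpace 𝕜 E]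
  (b : HilbertBasis κ 𝕜 E)

theorem ext_inner {x y : E} (h : ∀ k, inner 𝕜 (b k) x = inner 𝕜 (b k) y) : x = y :=
  b.repr.injective <| lp.ext <| funext fun k => by simpa only [b.repr_apply_apply] using h k

theorem ext_continuousLinearMap {F : Type*} [NormedAddCommGroup F] [NormedSpace 𝕜 F]
    {T U : E →L[𝕜] F} (h : ∀ k, T (b k) = U (b k)) : T = U :=
  T.ext_on (Submodule.dense_iff_topologicalClosure_eq_top.mpr b.dense_span)
    (by rintro _ ⟨k, rfl⟩; exact h k)

variable [CompleteSpace E] {ι : Type*} (d : ι × κ ≃ κ)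

def cuntzIsometry (i : ι) : E →L[𝕜] E :=
  have hv : Orthonormal 𝕜 fun k => b (d (i, k)) :=
    b.orthonormal.comp _ (d.injective.comp (Prod.mk_right_injective i))
  (hv.orthogonalFamily.linearIsometry.comp b.repr.toLinearIsometry).toContinuousLinearMap

theorem cuntzIsometry_apply (i : ι) (k : κ) : b.cuntzIsometry d i (b k) = b (d (i, k)) := by
  classical
  simp [cuntzIsometry, b.repr_self, LinearIsometry.toSpanSingleton]

theorem star_cuntzIsometry_apply [DecidableEq ι] (i j : ι) (k : κ) :
    star (b.cuntzIsometry d i) (b (d (j, k))) = if i = j then b k else 0 := by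
  classical
  refine b.ext_inner fun l => ?_
  rw [ContinuousLinearMap.star_eq_adjoint, ContinuousLinearMap.adjoint_inner_right,
    cuntzIsometry_apply]
  split_ifs with h <;> simp [orthonormal_iff_ite.mp b.orthonormal, d.apply_eq_iff_eq, h]

theorem isCuntzFamily_cuntzIsometry [Fintype ι] [DecidableEq ι] :
    IsCuntzFamily (b.cuntzIsometry d) where
  star_mul i j := b.ext_continuousLinearMap fun k => by
    rw [mul_apply_eq_comp, cuntzIsometry_apply, star_cuntzIsometry_apply]
    split_ifs <;> simp
  sum_mul_star := b.ext_continuousLinearMap fun k => by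
    obtain ⟨⟨j, k⟩, rfl⟩ := d.surjective k
    simp [star_cuntzIsometry_apply, apply_ite, cuntzIsometry_apply]

end HilbertBasis

/-- **Iterative construction of qubit subalgebras:** for every `n : ℕ`, `B(H)` is
`*`-isomorphic (as a `ℂ`-star-algebra) to the `2^n × 2^n` matrix algebra over `B(H)`
(with conjugate-transpose star), i.e. `B(H) ≅ M₂(ℂ)^{⊗n} ⊗ B(H)`. -/
theorem iterated_qubit_construction :
    ∀ n : ℕ, Nonempty
      ((H →L[ℂ] H) ≃⋆ₐ[ℂ] Matrix (Fin (2 ^ n)) (Fin (2 ^ n)) (H →L[ℂ] H)) := by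
  intro n
  obtain ⟨d⟩ : Nonempty (Fin (2 ^ n) × ℤ ≃ ℤ) := nonempty_equiv_of_countable
  exact ⟨(HilbertBasis.isCuntzFamily_cuntzIsometry default d).starAlgEquivMatrix ℂ⟩
end
end
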